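/- Let M be a symmetric positive definite N×N real matrix, H(x) = √⟨Mx,x⟩, H°(x) = √⟨M⁻¹x,x⟩, and T_H(x) = Mx/⟨Mx,x⟩ on ℝ^N∖{0}. Then for every y ∈ ℝ^N∖{0} and every ξ ∈ ℝ^N, H°(DT_H(y)ξ) = H(ξ)/H(y)². -/

import Mathlib

open Matrix

/-!
Differentiating along the line `t ↦ y + t ξ` gives `DT_H(y) ξ = M r / ⟨M y, y⟩`, where
`r = ξ - (2 ⟨M y, ξ⟩ / ⟨M y, y⟩) y` is the reflection of `ξ` in the hyperplane `M`-orthogonal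
to `y`. Since `⟨M⁻¹ (M w), M w⟩ = ⟨M w, w⟩` and the reflection preserves `⟨M ·, ·⟩`, this gives
`H°(DT_H(y) ξ) = H(r) / H(y)² = H(ξ) / H(y)²`.
-/

theorem HasDerivAt.dotProduct {𝕜 ι : Type*} [NontriviallyNormedField 𝕜] [Fintype ι]
    {u v : 𝕜 → ι → 𝕜} {u' v' : ι → 𝕜} {t : 𝕜}
    (hu : HasDerivAt u u' t) (hv : HasDerivAt v v' t) :
    HasDerivAt (fun s => u s ⬝ᵥ v s) (u' ⬝ᵥ v t + u t ⬝ᵥ v') t :=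
  (HasDerivAt.fun_sum (u := Finset.univ) fun i _ =>
    (hasDerivAt_pi.1 hu i).fun_mul (hasDerivAt_pi.1 hv i)).congr_deriv Finset.sum_add_distrib

namespace Matrix

variable {n : Type*} [Fintype n]

theorem IsSymm.mulVec_dotProduct_comm {R : Type*} [CommSemiring R] {M : Matrix n n R}
    (hM : M.IsSymm) (x y : n → R) : M *ᵥ x ⬝ᵥ y = M *ᵥ y ⬝ᵥ x := by
  rw [dotProduct_comm, ← hM.eq, dotProduct_transpose_mulVec, hM.eq, dotProduct_comm]

theorem IsSymm.mulVec_dotProduct_reflection {K : Type*} [Field K] {M : Matrix n n K}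
    (hM : M.IsSymm) {y : n → K} (hy : M *ᵥ y ⬝ᵥ y ≠ 0) (ξ : n → K) :
    M *ᵥ (ξ - (2 * (M *ᵥ y ⬝ᵥ ξ) / (M *ᵥ y ⬝ᵥ y)) • y) ⬝ᵥ
        (ξ - (2 * (M *ᵥ y ⬝ᵥ ξ) / (M *ᵥ y ⬝ᵥ y)) • y) = M *ᵥ ξ ⬝ᵥ ξ := by
  simp only [mulVec_sub, mulVec_smul, sub_dotProduct, dotProduct_sub, smul_dotProduct,
    dotProduct_smul, hM.mulVec_dotProduct_comm ξ y, smul_eq_mul]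
  field_simp
  ring

theorem inv_mulVec_mulVec_dotProduct_mulVec {R : Type*} [CommRing R] [DecidableEq n]
    {M : Matrix n n R} (hM : IsUnit M) (w : n → R) :
    M⁻¹ *ᵥ (M *ᵥ w) ⬝ᵥ M *ᵥ w = M *ᵥ w ⬝ᵥ w := by
  rw [mulVec_mulVec, nonsing_inv_mul M (M.isUnit_iff_isUnit_det.mp hM), one_mulVec,
    dotProduct_comm]

section Kelvin

variable {𝕜 : Type*} [NontriviallyNormedField 𝕜]

noncomputable def kelvin (M : Matrix n n 𝕜) (x : n → 𝕜) : n → 𝕜 :=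
  (M *ᵥ x ⬝ᵥ x)⁻¹ • M *ᵥ x

theorem differentiableAt_kelvin (M : Matrix n n 𝕜) {y : n → 𝕜} (hy : M *ᵥ y ⬝ᵥ y ≠ 0) :
    DifferentiableAt 𝕜 (kelvin M) y := by
  have hL : Differentiable 𝕜 (M *ᵥ ·) := differentiable_pi.2 fun i => by
    simp only [mulVec, dotProduct]
    fun_prop
  have hQ : Differentiable 𝕜 fun x : n → 𝕜 => M *ᵥ x ⬝ᵥ x := by
    simp only [dotProduct, mulVec]
    fun_prop
  exact ((hQ y).inv hy).smul (hL y)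

theorem hasLineDerivAt_kelvin (M : Matrix n n 𝕜) {y : n → 𝕜} (hy : M *ᵥ y ⬝ᵥ y ≠ 0)
    (ξ : n → 𝕜) :
    HasLineDerivAt 𝕜 (kelvin M)
      ((M *ᵥ y ⬝ᵥ y)⁻¹ • M *ᵥ ξ -
        ((M *ᵥ ξ ⬝ᵥ y + M *ᵥ y ⬝ᵥ ξ) / (M *ᵥ y ⬝ᵥ y) ^ 2) • M *ᵥ y) y ξ := by
  have hline : HasDerivAt (fun t : 𝕜 => y + t • ξ) ξ 0 := by
    simpa using ((hasDerivAt_id (0 : 𝕜)).smul_const ξ).const_add y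
  have hMline : HasDerivAt (fun t : 𝕜 => M *ᵥ (y + t • ξ)) (M *ᵥ ξ) 0 := by
    simp only [mulVec_add, mulVec_smul]
    simpa using ((hasDerivAt_id (0 : 𝕜)).smul_const (M *ᵥ ξ)).const_add (M *ᵥ y)
  have hQinv := (hMline.dotProduct hline).fun_inv (by simpa using hy)
  refine (hQinv.fun_smul hMline).congr_deriv ?_
  simp only [zero_smul, add_zero]
  rw [sub_eq_add_neg, ← neg_smul, neg_div]

theorem fderiv_kelvin_apply {M : Matrix n n 𝕜} (hM : M.IsSymm) {y : n → 𝕜}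
    (hy : M *ᵥ y ⬝ᵥ y ≠ 0) (ξ : n → 𝕜) :
    fderiv 𝕜 (kelvin M) y ξ =
      M *ᵥ ((M *ᵥ y ⬝ᵥ y)⁻¹ • (ξ - (2 * (M *ᵥ y ⬝ᵥ ξ) / (M *ᵥ y ⬝ᵥ y)) • y)) := by
  rw [← (differentiableAt_kelvin M hy).lineDeriv_eq_fderiv,
    (hasLineDerivAt_kelvin M hy ξ).lineDeriv, hM.mulVec_dotProduct_comm ξ y]
  simp only [mulVec_smul, mulVec_sub, smul_sub, smul_smul]
  congr 2
  field_simp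
  ring

end Kelvin

end Matrix

theorem dual_norm_of_kelvin_derivative {N : ℕ}
    (M : Matrix (Fin N) (Fin N) ℝ) (hM : M.PosDef)
    (H Hdual : (Fin N → ℝ) → ℝ)
    (hH : ∀ x, H x = Real.sqrt (M.mulVec x ⬝ᵥ x))
    (hHdual : ∀ x, Hdual x = Real.sqrt (M⁻¹.mulVec x ⬝ᵥ x))
    (T : (Fin N → ℝ) → (Fin N → ℝ))
    (hT : ∀ x, T x = (M.mulVec x ⬝ᵥ x)⁻¹ • M.mulVec x) :
    ∀ y : Fin N → ℝ, y ≠ 0 → ∀ ξ : Fin N → ℝ,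
      Hdual (fderiv ℝ T y ξ) = H ξ / (H y) ^ 2 := by
  intro y hy ξ
  have hsymm : M.IsSymm := isHermitian_iff_isSymm.1 hM.isHermitian
  have hq : 0 < M *ᵥ y ⬝ᵥ y := by simpa [dotProduct_comm] using hM.dotProduct_mulVec_pos hy
  have hT_eq : T = kelvin M := funext hT
  rw [hHdual, hH, hH, hT_eq, fderiv_kelvin_apply hsymm hq.ne',
    inv_mulVec_mulVec_dotProduct_mulVec hM.isUnit, mulVec_smul, smul_dotProduct,
    dotProduct_smul, hsymm.mulVec_dotProduct_reflection hq.ne', Real.sq_sqrt hq.le,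
    smul_eq_mul, smul_eq_mul, ← mul_assoc, ← sq, Real.sqrt_mul (sq_nonneg _),
    Real.sqrt_sq (inv_nonneg.2 hq.le), inv_mul_eq_div]
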